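/- arXiv:2303.05357 — 5 statements merged into one kernel-verified Lean document; each statement's English description precedes it below -/
import Mathlib

section
/- Let (μ*, λ*, x*) be a 2D-eigentriplet of Hermitian matrices (A, C), i.e., (A - μ*C)x* = λ*x*, x*^H C x* = 0, x*^H x* = 1. Suppose λ* is an eigenvalue of A - μ*C of multiplicity at least 3. Then the Jacobian J(μ*, λ*, x*) = [[A - μ*C - λ*I, -Cx*, -x*]; [-x*^H C, 0, 0]; [-x*^H, 0, 0]] (an (n+2)×(n+2) matrix) is singular. -/
open Matrix

/-- The Jacobian of the 2DEVP system at a triplet (μ, λ, x). -/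
noncomputable def Jmat {n : ℕ} (A C : Matrix (Fin n) (Fin n) ℂ) (μ lam : ℝ)
    (x : Fin n → ℂ) : Matrix (Fin n ⊕ Fin 2) (Fin n ⊕ Fin 2) ℂ :=
  Matrix.fromBlocks (A - (μ : ℂ) • C - (lam : ℂ) • 1)
    (Matrix.of fun i j => if j = (0 : Fin 2) then -((C *ᵥ x) i) else -(x i))
    (Matrix.of fun i j => if i = (0 : Fin 2) then -((star x ᵥ* C) j) else -(star x j))
    0

theorem jacobian_singular_of_multiplicity_ge_three {n : ℕ}
    (A C : Matrix (Fin n) (Fin n) ℂ) (hA : A.IsHermitian) (hC : C.IsHermitian)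
    (μs lams : ℝ) (xs : Fin n → ℂ)
    (heig : (A - (μs : ℂ) • C) *ᵥ xs = (lams : ℂ) • xs)
    (hiso : star xs ⬝ᵥ (C *ᵥ xs) = 0)
    (hunit : star xs ⬝ᵥ xs = 1)
    (hmult : 3 ≤ Module.finrank ℂ
      (LinearMap.ker (Matrix.toLin' (A - (μs : ℂ) • C - (lams : ℂ) • 1)))) :
    ¬ IsUnit (Jmat A C μs lams xs) := by
  set B : Matrix (Fin n) (Fin n) ℂ := A - (μs : ℂ) • C - (lams : ℂ) • 1 with hB
  set K := LinearMap.ker (Matrix.toLin' B) with hK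
  -- the linear map recording the two orthogonality constraints
  let f1 : (Fin n → ℂ) →ₗ[ℂ] ℂ :=
  { toFun := fun w => star xs ⬝ᵥ w
    map_add' := fun w z => dotProduct_add _ w z
    map_smul' := fun c w => dotProduct_smul c _ w }
  let f2 : (Fin n → ℂ) →ₗ[ℂ] ℂ :=
  { toFun := fun w => (star xs ᵥ* C) ⬝ᵥ w
    map_add' := fun w z => dotProduct_add _ w z
    map_smul' := fun c w => dotProduct_smul c _ w }
  let φ : K →ₗ[ℂ] ℂ × ℂ := LinearMap.prod (f1 ∘ₗ K.subtype) (f2 ∘ₗ K.subtype)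
  have hninj : ¬ Function.Injective φ := by
    intro h
    have h2 := LinearMap.finrank_le_finrank_of_injective h
    simp only [Module.finrank_prod, Module.finrank_self] at h2
    omega
  rw [← LinearMap.ker_eq_bot] at hninj
  obtain ⟨y, hyker, hyne⟩ := Submodule.ne_bot_iff _ |>.mp hninj
  set z : Fin n → ℂ := (y : Fin n → ℂ) with hzdef
  have hzne : z ≠ 0 := by
    intro h
    apply hyne
    exact Subtype.ext h
  have hBz : B *ᵥ z = 0 := by
    have := y.2
    rwa [LinearMap.mem_ker, Matrix.toLin'_apply] at this
  have hφ : φ y = 0 := hyker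
  have h1 : star xs ⬝ᵥ z = 0 := congrArg Prod.fst hφ
  have h2 : (star xs ᵥ* C) ⬝ᵥ z = 0 := congrArg Prod.snd hφ
  clear hφ hyker
  let v : Fin n ⊕ Fin 2 → ℂ := Sum.elim z 0
  have hvne : v ≠ 0 := by
    intro h
    apply hzne
    funext i
    have := congrFun h (Sum.inl i)
    simpa [v] using this
  have hJv : Jmat A C μs lams xs *ᵥ v = 0 := by
    show Matrix.fromBlocks _ _ _ _ *ᵥ Sum.elim z 0 = 0
    rw [Matrix.fromBlocks_mulVec]
    funext i
    rcases i with i | i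
    · simp [Matrix.mulVec, dotProduct, hB] at hBz ⊢
      exact congrFun hBz i
    · simp only [Sum.elim_inr, Pi.add_apply, Matrix.mulVec, dotProduct, Matrix.of_apply,
        Matrix.zero_mulVec, Pi.zero_apply]
      fin_cases i
      · simp only [Fin.zero_eta, if_pos rfl]
        have : -((star xs ᵥ* C) ⬝ᵥ z) = 0 := by rw [h2]; ring
        simpa [dotProduct, neg_mul, Finset.sum_neg_distrib] using this
      · have h1' : -(star xs ⬝ᵥ z) = 0 := by rw [h1]; ring
        simp only [show (⟨1, by norm_num⟩ : Fin 2) ≠ 0 by decide, if_neg]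
        simpa [dotProduct, neg_mul] using h1'
  have hdet : (Jmat A C μs lams xs).det = 0 :=
    (Matrix.exists_mulVec_eq_zero_iff).mp ⟨v, hvne, hJv⟩
  intro hU
  have := (Matrix.isUnit_iff_isUnit_det _).mp hU
  rw [hdet] at this
  exact not_isUnit_zero this
end

section
/- Let (μ*, λ*, x*) be a 2D-eigentriplet of Hermitian (A, C) where λ* is an eigenvalue of A - μ*C of multiplicity exactly 2, and let Ṽ* ∈ ℂ^{n×2} be an orthonormal basis of the eigenspace of A - μ*C for λ*. Then the Jacobian J(μ*, λ*, x*) is nonsingular if and only if the 2×2 matrix Ṽ*^H C Ṽ* is invertible. -/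
open Matrix
open scoped ComplexConjugate

/-- A singular 2×2 Hermitian matrix with `cᴴ M c = 0` kills `c`. -/
lemma lemA (M : Matrix (Fin 2) (Fin 2) ℂ) (hM : M.IsHermitian) (hdet : M.det = 0)
    (c : Fin 2 → ℂ) (hq : star c ⬝ᵥ (M *ᵥ c) = 0) : M *ᵥ c = 0 := by
  rw [Matrix.det_fin_two] at hdet
  simp only [dotProduct, Fin.sum_univ_two, Pi.star_apply, mulVec, Complex.star_def] at hq
  have h00 : conj (M 0 0) = M 0 0 := hM.apply 0 0
  have h10 : conj (M 0 1) = M 1 0 := hM.apply 1 0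
  by_cases hM00 : M 0 0 = 0
  · have h0110 : M 0 1 * conj (M 0 1) = 0 := by
      rw [h10]; linear_combination -hdet + M 1 1 * hM00
    have h01 : M 0 1 = 0 := by
      rcases mul_eq_zero.mp h0110 with h | h
      · exact h
      · simpa using congrArg conj h
    have h10' : M 1 0 = 0 := by rw [← h10, h01, map_zero]
    have hc : (M 1 1 * c 1) * conj (c 1) = 0 := by
      linear_combination hq - (conj (c 0) * c 0) * hM00 - (conj (c 0) * c 1) * h01
        - (conj (c 1) * c 0) * h10'
    have h11c : M 1 1 * c 1 = 0 := by
      rcases mul_eq_zero.mp hc with h | h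
      · exact h
      · have : c 1 = 0 := by simpa using congrArg conj h
        rw [this, mul_zero]
    funext i
    fin_cases i <;> simp [mulVec, dotProduct, Fin.sum_univ_two, hM00, h01, h10', h11c]
  · set z := M 0 0 * c 0 + M 0 1 * c 1 with hz
    have hzc : conj z = M 0 0 * conj (c 0) + M 1 0 * conj (c 1) := by
      rw [hz, map_add, RingHom.map_mul, RingHom.map_mul, h00, h10]
    have hzz : z * conj z = 0 := by
      rw [hzc, hz]
      linear_combination M 0 0 * hq - (c 1 * conj (c 1)) * hdet
    have hz0 : z = 0 := by
      rcases mul_eq_zero.mp hzz with h | h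
      · exact h
      · simpa using congrArg conj h
    have hrow2 : M 0 0 * (M 1 0 * c 0 + M 1 1 * c 1) = 0 := by
      rw [hz] at hz0
      linear_combination M 1 0 * hz0 + c 1 * hdet
    have hrow2' : M 1 0 * c 0 + M 1 1 * c 1 = 0 :=
      (mul_eq_zero.mp hrow2).resolve_left hM00
    rw [hz] at hz0
    funext i
    fin_cases i <;> simp [mulVec, dotProduct, Fin.sum_univ_two]
    · exact hz0
    · exact hrow2'

/-- If `v ∈ ℂ²` is orthogonal to `c` and `d`, with `c` unit, `d ⊥ c`, `d ≠ 0`, then `v = 0`. -/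
lemma lemB (c d v : Fin 2 → ℂ)
    (hcc : star c ⬝ᵥ c = 1) (hcd : star c ⬝ᵥ d = 0) (hd : d ≠ 0)
    (hv1 : star c ⬝ᵥ v = 0) (hv2 : star d ⬝ᵥ v = 0) : v = 0 := by
  simp only [dotProduct, Fin.sum_univ_two, Pi.star_apply, Complex.star_def] at hcc hcd hv1 hv2
  have hene : conj (c 0) * conj (d 1) - conj (c 1) * conj (d 0) ≠ 0 := by
    intro h0
    have hce : c 0 * d 1 - c 1 * d 0 = 0 := by
      have := congrArg conj h0
      simpa using this
    have hd1 : d 1 = 0 := by linear_combination (-(d 1)) * hcc + c 1 * hcd + conj (c 0) * hce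
    have hd0 : d 0 = 0 := by linear_combination (-(d 0)) * hcc + c 0 * hcd - conj (c 1) * hce
    exact hd (funext fun i => by fin_cases i <;> simp [hd0, hd1])
  have h0 : (conj (c 0) * conj (d 1) - conj (c 1) * conj (d 0)) * v 0 = 0 := by
    linear_combination conj (d 1) * hv1 - conj (c 1) * hv2
  have h1 : (conj (c 0) * conj (d 1) - conj (c 1) * conj (d 0)) * v 1 = 0 := by
    linear_combination conj (c 0) * hv2 - conj (d 0) * hv1
  funext i
  fin_cases i
  · simpa using (mul_eq_zero.mp h0).resolve_left hene
  · simpa using (mul_eq_zero.mp h1).resolve_left hene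
open scoped ComplexConjugate


theorem jacobian_nonsingular_iff_multiplicity_two {n : ℕ}
    (A C : Matrix (Fin n) (Fin n) ℂ) (hA : A.IsHermitian) (hC : C.IsHermitian)
    (μs lams : ℝ) (xs : Fin n → ℂ)
    (heig : (A - (μs : ℂ) • C) *ᵥ xs = (lams : ℂ) • xs)
    (hiso : star xs ⬝ᵥ (C *ᵥ xs) = 0)
    (hunit : star xs ⬝ᵥ xs = 1)
    (hmult : Module.finrank ℂ
      (LinearMap.ker (Matrix.toLin' (A - (μs : ℂ) • C - (lams : ℂ) • 1))) = 2)
    (V : Matrix (Fin n) (Fin 2) ℂ)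
    (hVorth : Vᴴ * V = 1)
    (hVeig : (A - (μs : ℂ) • C - (lams : ℂ) • 1) * V = 0) :
    IsUnit (Jmat A C μs lams xs) ↔ IsUnit (Vᴴ * C * V) := by
  classical
  set B : Matrix (Fin n) (Fin n) ℂ := A - (μs : ℂ) • C - (lams : ℂ) • 1 with hBdef
  set M : Matrix (Fin 2) (Fin 2) ℂ := Vᴴ * C * V with hMdef
  -- Basic facts
  have hBH : Bᴴ = B := by
    simp [hBdef, conjTranspose_sub, conjTranspose_smul, conjTranspose_one,
      Complex.star_def, Complex.conj_ofReal, hA.eq, hC.eq]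
  have hBx : B *ᵥ xs = 0 := by
    have h1 : ((lams : ℂ) • (1 : Matrix (Fin n) (Fin n) ℂ)) *ᵥ xs = (lams : ℂ) • xs := by
      rw [smul_mulVec, one_mulVec]
    rw [hBdef, sub_mulVec, heig, h1, sub_self]
  have hBV : B * V = 0 := hVeig
  have hMH : M.IsHermitian := isHermitian_conjTranspose_mul_mul V hC
  have hVleft : ∀ d : Fin 2 → ℂ, Vᴴ *ᵥ (V *ᵥ d) = d := by
    intro d; rw [mulVec_mulVec, hVorth, one_mulVec]
  -- kernel of B is the range of V
  have hproj : ∀ y : Fin n → ℂ, B *ᵥ y = 0 → V *ᵥ (Vᴴ *ᵥ y) = y := by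
    have hVinj : Function.Injective (Matrix.toLin' V) := by
      intro d1 d2 h
      have h2 := congrArg (fun v => Vᴴ *ᵥ v) h
      simpa [Matrix.toLin'_apply, hVleft] using h2
    have hrange : LinearMap.range (Matrix.toLin' V) = LinearMap.ker (Matrix.toLin' B) := by
      apply Submodule.eq_of_le_of_finrank_eq
      · rintro _ ⟨d, rfl⟩
        simp only [LinearMap.mem_ker, Matrix.toLin'_apply, mulVec_mulVec, hBV, zero_mulVec]
      · rw [LinearMap.finrank_range_of_inj hVinj, hmult, Module.finrank_fin_fun]
    intro y hy
    have hy' : y ∈ LinearMap.range (Matrix.toLin' V) := by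
      rw [hrange]
      simpa [LinearMap.mem_ker, Matrix.toLin'_apply] using hy
    obtain ⟨d, hd⟩ := hy'
    rw [Matrix.toLin'_apply] at hd
    rw [← hd, hVleft]
  set c : Fin 2 → ℂ := Vᴴ *ᵥ xs with hcdef
  have hxc : V *ᵥ c = xs := hproj xs hBx
  -- pairing lemmas
  have hpair1 : ∀ u w : Fin 2 → ℂ, star (V *ᵥ u) ⬝ᵥ (V *ᵥ w) = star u ⬝ᵥ w := by
    intro u w
    rw [star_mulVec, ← dotProduct_mulVec, mulVec_mulVec, hVorth, one_mulVec]
  have hpair2 : ∀ u w : Fin 2 → ℂ,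
      star (V *ᵥ u) ⬝ᵥ (C *ᵥ (V *ᵥ w)) = star u ⬝ᵥ (M *ᵥ w) := by
    intro u w
    rw [star_mulVec, ← dotProduct_mulVec, mulVec_mulVec, mulVec_mulVec, hMdef]
  have hcc : star c ⬝ᵥ c = 1 := by
    have h := hpair1 c c
    rw [hxc] at h
    rw [← h, hunit]
  have hc0 : c ≠ 0 := by
    intro h
    rw [h] at hcc
    simp at hcc
  have hMcc : star c ⬝ᵥ (M *ᵥ c) = 0 := by
    have h := hpair2 c c
    rw [hxc] at h
    rw [← h, hiso]
  have hVB : Vᴴ * B = 0 := by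
    have h := congrArg conjTranspose hBV
    rwa [conjTranspose_mul, hBH, conjTranspose_zero] at h
  have hxB : star xs ᵥ* B = 0 := by
    have h := star_mulVec B xs
    rw [hBx, hBH] at h
    simpa using h.symm
  -- Block multiplication formula
  have htop : ∀ v : Fin 2 → ℂ,
      (Matrix.of fun i j => if j = (0 : Fin 2) then -((C *ᵥ xs) i) else -(xs i)) *ᵥ v =
      -(v 0 • (C *ᵥ xs)) - v 1 • xs := by
    intro v
    funext i
    simp [mulVec, dotProduct, Fin.sum_univ_two]
    ring
  have hbot : ∀ y : Fin n → ℂ,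
      (Matrix.of fun i j => if i = (0 : Fin 2) then -((star xs ᵥ* C) j) else -(star xs j)) *ᵥ y =
      ![-((star xs ᵥ* C) ⬝ᵥ y), -(star xs ⬝ᵥ y)] := by
    intro y
    funext j
    fin_cases j <;> simp [mulVec, dotProduct, neg_mul, Finset.sum_neg_distrib]
  have hJmul : ∀ (y : Fin n → ℂ) (v : Fin 2 → ℂ),
      Jmat A C μs lams xs *ᵥ Sum.elim y v =
      Sum.elim (B *ᵥ y - v 0 • (C *ᵥ xs) - v 1 • xs)
        ![-((star xs ᵥ* C) ⬝ᵥ y), -(star xs ⬝ᵥ y)] := by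
    intro y v
    unfold Jmat
    rw [fromBlocks_mulVec]
    simp only [Sum.elim_comp_inl, Sum.elim_comp_inr]
    rw [htop, hbot, zero_mulVec, add_zero, ← hBdef]
    abel
  -- the key kernel equivalence
  have key : (∃ u, u ≠ 0 ∧ Jmat A C μs lams xs *ᵥ u = 0) ↔
      (∃ w, w ≠ 0 ∧ M *ᵥ w = 0) := by
    constructor
    · rintro ⟨u, hu, hJu⟩
      set y : Fin n → ℂ := u ∘ Sum.inl with hydef
      set v : Fin 2 → ℂ := u ∘ Sum.inr with hvdef
      have hu' : u = Sum.elim y v := by funext i; cases i <;> rfl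
      rw [hu', hJmul y v] at hJu
      have h1 : B *ᵥ y - v 0 • (C *ᵥ xs) - v 1 • xs = 0 := by
        funext i; exact congrFun hJu (Sum.inl i)
      have hq0 : (star xs ᵥ* C) ⬝ᵥ y = 0 := by
        have := congrFun hJu (Sum.inr 0)
        simpa using this
      have hq1 : star xs ⬝ᵥ y = 0 := by
        have := congrFun hJu (Sum.inr 1)
        simpa using this
      have ht : B *ᵥ y = v 0 • (C *ᵥ xs) + v 1 • xs := by
        rwa [sub_sub, sub_eq_zero] at h1
      have hb : v 1 = 0 := by
        have h := congrArg (fun z => star xs ⬝ᵥ z) ht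
        simp only [dotProduct_mulVec, hxB, zero_dotProduct, dotProduct_add,
          dotProduct_smul, hiso, hunit, smul_eq_mul, mul_zero, mul_one, zero_add] at h
        exact h.symm
      have hMc0 : v 0 • (M *ᵥ c) = 0 := by
        have h := congrArg (fun z => Vᴴ *ᵥ z) ht
        simp only [mulVec_mulVec, hVB, zero_mulVec, mulVec_add, mulVec_smul, hb,
          zero_smul, add_zero] at h
        rw [← hxc, mulVec_mulVec] at h
        rw [hMdef]
        exact h.symm
      by_cases ha : v 0 = 0
      · -- y is in the kernel of B
        have hBy : B *ᵥ y = 0 := by rw [ht, ha, hb]; simp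
        have hyne : y ≠ 0 := by
          intro hy0
          apply hu
          rw [hu']
          funext i
          cases i with
          | inl i => simpa using congrFun hy0 i
          | inr j =>
            fin_cases j
            · simpa using ha
            · simpa using hb
        set d : Fin 2 → ℂ := Vᴴ *ᵥ y with hddef
        have hyd : V *ᵥ d = y := hproj y hBy
        have hdne : d ≠ 0 := fun h => hyne (by rw [← hyd, h, mulVec_zero])
        have hcd : star c ⬝ᵥ d = 0 := by
          have h := hpair1 c d
          rw [hxc, hyd] at h
          rw [← h, hq1]
        have hcMd : star c ⬝ᵥ (M *ᵥ d) = 0 := by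
          have h := hpair2 c d
          rw [hxc, hyd] at h
          rw [← h, dotProduct_mulVec, hq0]
        have hdMc : star d ⬝ᵥ (M *ᵥ c) = 0 := by
          rw [dotProduct_mulVec, ← hMH.eq, ← star_mulVec, star_dotProduct, hcMd, star_zero]
        exact ⟨c, hc0, lemB c d (M *ᵥ c) hcc hcd hdne hMcc hdMc⟩
      · refine ⟨c, hc0, ?_⟩
        rcases smul_eq_zero.mp hMc0 with h | h
        · exact absurd h ha
        · exact h
    · rintro ⟨w, hw, hMw⟩
      have hdet : M.det = 0 := Matrix.exists_mulVec_eq_zero_iff.mp ⟨w, hw, hMw⟩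
      have hMc : M *ᵥ c = 0 := lemA M hMH hdet c hMcc
      have hcM : star c ᵥ* M = 0 := by
        have h := star_mulVec M c
        rw [hMc, hMH.eq] at h
        simpa using h.symm
      set d : Fin 2 → ℂ := ![-(conj (c 1)), conj (c 0)] with hddef
      have hcd : star c ⬝ᵥ d = 0 := by
        simp [hddef, dotProduct, Fin.sum_univ_two, Complex.star_def]
        ring
      have hdne : d ≠ 0 := by
        intro h
        have h1 : c 0 = 0 := by
          have h' := congrFun h 1
          rw [hddef] at h'
          simpa using h'
        have h0 : c 1 = 0 := by
          have h' := congrFun h 0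
          rw [hddef] at h'
          simpa using h'
        apply hc0
        funext i
        fin_cases i
        · simpa using h1
        · simpa using h0
      refine ⟨Sum.elim (V *ᵥ d) 0, ?_, ?_⟩
      · intro h
        apply hdne
        have hVd : V *ᵥ d = 0 := by funext i; exact congrFun h (Sum.inl i)
        rw [← hVleft d, hVd, mulVec_zero]
      · rw [hJmul (V *ᵥ d) 0]
        have e1 : B *ᵥ (V *ᵥ d) = 0 := by rw [mulVec_mulVec, hBV, zero_mulVec]
        have e2 : (star xs ᵥ* C) ⬝ᵥ (V *ᵥ d) = 0 := by
          rw [← dotProduct_mulVec, ← hxc, hpair2, dotProduct_mulVec, hcM, zero_dotProduct]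
        have e3 : star xs ⬝ᵥ (V *ᵥ d) = 0 := by
          rw [← hxc, hpair1, hcd]
        funext i
        cases i with
        | inl i => simp [e1]
        | inr j => fin_cases j <;> simp [e2, e3]
  -- conclude
  rw [Matrix.isUnit_iff_isUnit_det, Matrix.isUnit_iff_isUnit_det,
    isUnit_iff_ne_zero, isUnit_iff_ne_zero, ← not_iff_not, not_ne_iff, not_ne_iff,
    ← Matrix.exists_mulVec_eq_zero_iff, ← Matrix.exists_mulVec_eq_zero_iff]
  exact key
end

section
/- Let U, V ∈ ℂ^{n×ℓ}, assume U has orthonormal columns and ‖U - V‖ ≤ 1/2 (spectral norm). Then ‖sin Θ(U, V)‖ ≤ 2‖U - V‖, where ‖sin Θ(U,V)‖ = max of (sup over unit u ∈ range(U) of dist(u, range(V)), sup over unit v ∈ range(V) of dist(v, range(U))). -/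
/-!
If `Uz` is a unit vector of `range U`, then `Vz ∈ range V` lies within `‖U - V‖ ‖z‖ = ‖U - V‖`
of it, since `U` is an isometry. If `Vz` is a unit vector of `range V`, the isometry gives
`‖z‖ = ‖Uz‖ ≤ 1 + ‖U - V‖ ‖z‖`, so `‖z‖ ≤ 2` once `‖U - V‖ ≤ 1/2`, and `Uz ∈ range U` lies
within `2 ‖U - V‖` of `Vz`.
-/

open Matrix

noncomputable def enormC {m : ℕ} (x : Fin m → ℂ) : ℝ :=
  Real.sqrt (star x ⬝ᵥ x).re

noncomputable def mnorm {m k : ℕ} (M : Matrix (Fin m) (Fin k) ℂ) : ℝ :=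
  sSup {r | ∃ z : Fin k → ℂ, enormC z = 1 ∧ r = enormC (M *ᵥ z)}

def colSpan {m k : ℕ} (U : Matrix (Fin m) (Fin k) ℂ) : Set (Fin m → ℂ) :=
  {y | ∃ z : Fin k → ℂ, y = U *ᵥ z}

noncomputable def edistS {m : ℕ} (x : Fin m → ℂ) (S : Set (Fin m → ℂ)) : ℝ :=
  sInf {r | ∃ y ∈ S, r = enormC (x - y)}

noncomputable def sinTheta {m k l : ℕ} (U : Matrix (Fin m) (Fin k) ℂ)
    (V : Matrix (Fin m) (Fin l) ℂ) : ℝ :=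
  max (sSup {r | ∃ u ∈ colSpan U, enormC u = 1 ∧ r = edistS u (colSpan V)})
      (sSup {r | ∃ v ∈ colSpan V, enormC v = 1 ∧ r = edistS v (colSpan U)})

section

variable {m k : ℕ}

lemma enormC_eq_norm (x : Fin m → ℂ) : enormC x = ‖WithLp.toLp 2 x‖ := by
  rw [EuclideanSpace.norm_eq, enormC]
  congr 1
  simp only [dotProduct, Pi.star_apply, RCLike.star_def, mul_comm, Complex.mul_conj',
    Complex.re_sum]
  norm_cast

lemma enormC_nonneg (x : Fin m → ℂ) : 0 ≤ enormC x := Real.sqrt_nonneg _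

lemma enormC_add_le (x y : Fin m → ℂ) : enormC (x + y) ≤ enormC x + enormC y := by
  simp only [enormC_eq_norm, WithLp.toLp_add]
  exact norm_add_le _ _

lemma enormC_sub_comm (x y : Fin m → ℂ) : enormC (x - y) = enormC (y - x) := by
  simp only [enormC_eq_norm, WithLp.toLp_sub]
  exact norm_sub_rev _ _

lemma mnorm_eq_opNorm (M : Matrix (Fin m) (Fin k) ℂ) :
    mnorm M = ‖(toEuclideanLin M).toContinuousLinearMap‖ := by
  set T := (toEuclideanLin M).toContinuousLinearMap
  have hbdd : ∀ r ∈ {r | ∃ z : Fin k → ℂ, enormC z = 1 ∧ r = enormC (M *ᵥ z)}, r ≤ ‖T‖ := by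
    rintro _ ⟨z, hz, rfl⟩
    calc enormC (M *ᵥ z) = ‖T (WithLp.toLp 2 z)‖ := enormC_eq_norm _
      _ ≤ ‖T‖ * ‖WithLp.toLp 2 z‖ := T.le_opNorm _
      _ = ‖T‖ := by rw [← enormC_eq_norm, hz, mul_one]
  refine le_antisymm (Real.sSup_le hbdd (norm_nonneg _)) ?_
  refine T.opNorm_le_of_unit_norm (Real.sSup_nonneg ?_) fun x hx => ?_
  · rintro _ ⟨z, -, rfl⟩
    exact enormC_nonneg _
  · refine le_csSup ⟨‖T‖, hbdd⟩ ⟨x.ofLp, by rwa [enormC_eq_norm], ?_⟩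
    rw [enormC_eq_norm]
    rfl

lemma mnorm_nonneg (M : Matrix (Fin m) (Fin k) ℂ) : 0 ≤ mnorm M :=
  mnorm_eq_opNorm M ▸ norm_nonneg _

lemma enormC_mulVec_le (M : Matrix (Fin m) (Fin k) ℂ) (z : Fin k → ℂ) :
    enormC (M *ᵥ z) ≤ mnorm M * enormC z := by
  rw [mnorm_eq_opNorm, enormC_eq_norm, enormC_eq_norm]
  exact (toEuclideanLin M).toContinuousLinearMap.le_opNorm (WithLp.toLp 2 z)

lemma enormC_mulVec_of_conjTranspose_mul_self {U : Matrix (Fin m) (Fin k) ℂ}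
    (hU : Uᴴ * U = 1) (z : Fin k → ℂ) : enormC (U *ᵥ z) = enormC z := by
  rw [enormC, enormC, star_mulVec, dotProduct_mulVec, vecMul_vecMul, hU, vecMul_one]

lemma enormC_le_two_mul_enormC_mulVec {U V : Matrix (Fin m) (Fin k) ℂ} (hU : Uᴴ * U = 1)
    (h : mnorm (U - V) ≤ 1 / 2) (z : Fin k → ℂ) : enormC z ≤ 2 * enormC (V *ᵥ z) := by
  have hz : enormC z ≤ enormC (V *ᵥ z) + mnorm (U - V) * enormC z :=
    calc enormC z = enormC (V *ᵥ z + (U - V) *ᵥ z) := by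
          rw [← add_mulVec, add_sub_cancel, enormC_mulVec_of_conjTranspose_mul_self hU]
      _ ≤ enormC (V *ᵥ z) + enormC ((U - V) *ᵥ z) := enormC_add_le _ _
      _ ≤ enormC (V *ᵥ z) + mnorm (U - V) * enormC z := by gcongr; exact enormC_mulVec_le _ _
  linarith [mul_le_mul_of_nonneg_right h (enormC_nonneg z)]

lemma sSup_edistS_le {S T : Set (Fin m → ℂ)} {c : ℝ} (hc : 0 ≤ c)
    (h : ∀ u ∈ S, enormC u = 1 → ∃ y ∈ T, enormC (u - y) ≤ c) :
    sSup {r | ∃ u ∈ S, enormC u = 1 ∧ r = edistS u T} ≤ c := by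
  refine Real.sSup_le ?_ hc
  rintro _ ⟨u, hu, hu1, rfl⟩
  obtain ⟨y, hy, hle⟩ := h u hu hu1
  have hbdd : BddBelow {r | ∃ y ∈ T, r = enormC (u - y)} := by
    refine ⟨0, ?_⟩
    rintro _ ⟨w, -, rfl⟩
    exact enormC_nonneg _
  exact (csInf_le hbdd ⟨y, hy, rfl⟩).trans hle

end

theorem sinTheta_le_two_mul_norm_sub {n l : ℕ}
    (U V : Matrix (Fin n) (Fin l) ℂ) (hU : Uᴴ * U = 1)
    (h : mnorm (U - V) ≤ 1 / 2) :
    sinTheta U V ≤ 2 * mnorm (U - V) := by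
  have hε := mnorm_nonneg (U - V)
  refine max_le (sSup_edistS_le (by positivity) ?_) (sSup_edistS_le (by positivity) ?_)
  · rintro _ ⟨z, rfl⟩ hu
    refine ⟨V *ᵥ z, ⟨z, rfl⟩, ?_⟩
    calc enormC (U *ᵥ z - V *ᵥ z) = enormC ((U - V) *ᵥ z) := by rw [sub_mulVec]
      _ ≤ mnorm (U - V) * enormC z := enormC_mulVec_le _ _
      _ = mnorm (U - V) := by rw [← enormC_mulVec_of_conjTranspose_mul_self hU z, hu, mul_one]
      _ ≤ 2 * mnorm (U - V) := by linarith
  · rintro _ ⟨z, rfl⟩ hv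
    refine ⟨U *ᵥ z, ⟨z, rfl⟩, ?_⟩
    calc enormC (V *ᵥ z - U *ᵥ z) = enormC ((U - V) *ᵥ z) := by rw [enormC_sub_comm, sub_mulVec]
      _ ≤ mnorm (U - V) * enormC z := enormC_mulVec_le _ _
      _ ≤ mnorm (U - V) * 2 := by
          gcongr
          simpa [hv] using enormC_le_two_mul_enormC_mulVec hU h z
      _ = 2 * mnorm (U - V) := mul_comm _ _
end

section
/- Let (μ*, λ*, x*) be a 2D-eigentriplet of Hermitian (A,C) such that λ* is a simple eigenvalue of A - μ*C with corresponding differentiable eigenpair (λ(μ), x(μ)) satisfying λ(μ*) = λ*, x(μ*) = x*, x(μ)^H x'(μ) = 0. Let x'* = x'(μ*) and assume x'* ≠ 0. Set Ṽ* = [x*, x'*/‖x'*‖]. Then Ṽ* has orthonormal columns, (Ṽ*^H C Ṽ*)₁₁ = 0, (Ṽ*^H C Ṽ*)₁₂ = λ''(μ*)/(-2‖x'*‖), and det(Ṽ*^H C Ṽ*) = -(λ''(μ*)/(2‖x'*‖))² ≤ 0; in particular if λ''(μ*) ≠ 0 then Ṽ*^H C Ṽ* is indefinite. -/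
open Matrix

noncomputable def vecEnorm {m : ℕ} (x : Fin m → ℂ) : ℝ :=
  Real.sqrt (star x ⬝ᵥ x).re

/-!
Differentiating `(A - μC) x = λ x` gives `(A - μC) x' - C x = λ' x + λ x'`. Pairing with `x` gives
the Hellmann–Feynman formula `λ' = -xᴴCx`; pairing with `x'` and using the gauge `xᴴx' = 0` shows
that `x'ᴴCx = x'ᴴ(A - μC)x' - λ‖x'‖²` is real, so differentiating `λ'` once more gives
`λ'' = -2 xᴴCx'`. In the orthonormal basis `[x*, x'*/‖x'*‖]` the matrix of `C` is therefore
`[[0, b], [b, r]]` with `b = λ''/(-2‖x'*‖)` real, of determinant `-b²`, and its quadratic form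
`2 s b + Re r` on `(s, 1)` takes every real value as soon as `b ≠ 0`.
-/

variable {ι : Type*}

namespace Matrix.IsHermitian

theorem sub_ofReal_smul {A C : Matrix ι ι ℂ} (hA : A.IsHermitian) (hC : C.IsHermitian) (μ : ℝ) :
    (A - (μ : ℂ) • C).IsHermitian :=
  hA.sub (hC.smul (Complex.conj_ofReal μ))

variable [Fintype ι] {α : Type*} [CommSemiring α] [StarRing α] {M : Matrix ι ι α}

theorem star_dotProduct_mulVec_eq (hM : M.IsHermitian) (u v : ι → α) :
    star u ⬝ᵥ (M *ᵥ v) = star (M *ᵥ u) ⬝ᵥ v := by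
  rw [dotProduct_mulVec, star_mulVec, hM.eq]

theorem star_star_dotProduct_mulVec (hM : M.IsHermitian) (u v : ι → α) :
    star (star u ⬝ᵥ (M *ᵥ v)) = star v ⬝ᵥ (M *ᵥ u) := by
  rw [star_dotProduct v, hM.star_dotProduct_mulVec_eq]

end Matrix.IsHermitian

variable [Fintype ι]

theorem hasDerivAt_mulVec {x : ℝ → ι → ℂ} {x' : ι → ℂ} {μ : ℝ} (M : Matrix ι ι ℂ)
    (hx : HasDerivAt x x' μ) : HasDerivAt (fun ν => M *ᵥ x ν) (M *ᵥ x') μ :=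
  (M.mulVecLin.restrictScalars ℝ).toContinuousLinearMap.hasFDerivAt.comp_hasDerivAt μ hx

theorem hasDerivAt_dotProduct {x y : ℝ → ι → ℂ} {x' y' : ι → ℂ} {μ : ℝ}
    (hx : HasDerivAt x x' μ) (hy : HasDerivAt y y' μ) :
    HasDerivAt (fun ν => x ν ⬝ᵥ y ν) (x' ⬝ᵥ y μ + x μ ⬝ᵥ y') μ := by
  simp only [dotProduct, ← Finset.sum_add_distrib]
  exact HasDerivAt.fun_sum fun i _ => (hasDerivAt_pi.mp hx i).mul (hasDerivAt_pi.mp hy i)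

section EigenCurve

variable {A C : Matrix ι ι ℂ} {lam : ℝ → ℝ} {x : ℝ → ι → ℂ} {μ l' : ℝ} {v : ι → ℂ}

theorem eigen_equation_deriv (hlam : HasDerivAt lam l' μ) (hx : HasDerivAt x v μ)
    (heig : ∀ ν : ℝ, (A - (ν : ℂ) • C) *ᵥ x ν = (lam ν : ℂ) • x ν) :
    (A - (μ : ℂ) • C) *ᵥ v - C *ᵥ x μ = (l' : ℂ) • x μ + (lam μ : ℂ) • v := by
  have hlhs : HasDerivAt (fun ν : ℝ => A *ᵥ x ν - (ν : ℂ) • (C *ᵥ x ν))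
      (A *ᵥ v - ((μ : ℂ) • (C *ᵥ v) + (1 : ℂ) • (C *ᵥ x μ))) μ :=
    (hasDerivAt_mulVec A hx).sub ((hasDerivAt_id μ).ofReal_comp.smul (hasDerivAt_mulVec C hx))
  have hrhs : HasDerivAt (fun ν : ℝ => (lam ν : ℂ) • x ν) ((lam μ : ℂ) • v + (l' : ℂ) • x μ) μ :=
    hlam.ofReal_comp.smul hx
  have heig' : (fun ν : ℝ => A *ᵥ x ν - (ν : ℂ) • (C *ᵥ x ν)) = fun ν => (lam ν : ℂ) • x ν := by
    funext ν
    rw [← heig ν, sub_mulVec, smul_mulVec]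
  rw [heig'] at hlhs
  have hderiv := hlhs.unique hrhs
  rw [one_smul] at hderiv
  rw [sub_mulVec, smul_mulVec]
  linear_combination hderiv

theorem eigenvalue_deriv_eq (hA : A.IsHermitian) (hC : C.IsHermitian)
    (hlam : HasDerivAt lam l' μ) (hx : HasDerivAt x v μ)
    (heig : ∀ ν : ℝ, (A - (ν : ℂ) • C) *ᵥ x ν = (lam ν : ℂ) • x ν)
    (hunit : star (x μ) ⬝ᵥ x μ = 1) :
    (l' : ℂ) = -(star (x μ) ⬝ᵥ (C *ᵥ x μ)) := by
  have h := congrArg (star (x μ) ⬝ᵥ ·) (eigen_equation_deriv hlam hx heig)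
  simp only [dotProduct_sub, dotProduct_add, dotProduct_smul, smul_eq_mul, hunit,
    (hA.sub_ofReal_smul hC μ).star_dotProduct_mulVec_eq, heig μ, star_smul, smul_dotProduct,
    Complex.star_def, Complex.conj_ofReal] at h
  linear_combination -h

theorem star_dotProduct_mulVec_deriv_comm (hA : A.IsHermitian) (hC : C.IsHermitian)
    (hlam : HasDerivAt lam l' μ) (hx : HasDerivAt x v μ)
    (heig : ∀ ν : ℝ, (A - (ν : ℂ) • C) *ᵥ x ν = (lam ν : ℂ) • x ν)
    (hgauge : star (x μ) ⬝ᵥ v = 0) :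
    star v ⬝ᵥ (C *ᵥ x μ) = star (x μ) ⬝ᵥ (C *ᵥ v) := by
  have h := congrArg (star v ⬝ᵥ ·) (eigen_equation_deriv hlam hx heig)
  have hv : star v ⬝ᵥ x μ = 0 := by rw [star_dotProduct, hgauge, star_zero]
  simp only [dotProduct_sub, dotProduct_add, dotProduct_smul, smul_eq_mul, hv, mul_zero,
    zero_add] at h
  have hz : star v ⬝ᵥ (C *ᵥ x μ) = star v ⬝ᵥ ((A - (μ : ℂ) • C) *ᵥ v) - lam μ * (star v ⬝ᵥ v) := by
    linear_combination -h
  have hreal : star (star v ⬝ᵥ (C *ᵥ x μ)) = star v ⬝ᵥ (C *ᵥ x μ) := by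
    rw [hz, star_sub, star_mul', (hA.sub_ofReal_smul hC μ).star_star_dotProduct_mulVec,
      ← star_dotProduct, Complex.star_def, Complex.conj_ofReal]
  rw [← hreal, hC.star_star_dotProduct_mulVec]

theorem eigenvalue_second_deriv_eq {lam' : ℝ → ℝ} {x' : ℝ → ι → ℂ} {l'' : ℝ}
    (hA : A.IsHermitian) (hC : C.IsHermitian)
    (hlam : ∀ ν : ℝ, HasDerivAt lam (lam' ν) ν) (hx : ∀ ν : ℝ, HasDerivAt x (x' ν) ν)
    (hlam' : HasDerivAt lam' l'' μ)
    (heig : ∀ ν : ℝ, (A - (ν : ℂ) • C) *ᵥ x ν = (lam ν : ℂ) • x ν)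
    (hunit : ∀ ν : ℝ, star (x ν) ⬝ᵥ x ν = 1) (hgauge : star (x μ) ⬝ᵥ x' μ = 0) :
    (l'' : ℂ) = -2 * (star (x μ) ⬝ᵥ (C *ᵥ x' μ)) := by
  have hfun : (fun ν => (lam' ν : ℂ)) = fun ν => -(star (x ν) ⬝ᵥ (C *ᵥ x ν)) :=
    funext fun ν => eigenvalue_deriv_eq hA hC (hlam ν) (hx ν) heig (hunit ν)
  have hderiv := hlam'.ofReal_comp
  rw [hfun] at hderiv
  rw [hderiv.unique (hasDerivAt_dotProduct (hx μ).star (hasDerivAt_mulVec C (hx μ))).neg,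
    star_dotProduct_mulVec_deriv_comm hA hC (hlam μ) (hx μ) heig hgauge]
  ring

end EigenCurve

theorem Matrix.conjTranspose_transpose_of_mul_mul {α κ : Type*} [CommSemiring α] [StarRing α]
    (cols : κ → ι → α) (M : Matrix ι ι α) :
    (of cols)ᵀᴴ * M * (of cols)ᵀ = of fun i j => star (cols i) ⬝ᵥ (M *ᵥ cols j) := by
  ext i j
  rw [Matrix.mul_assoc]
  simp only [mul_apply, conjTranspose_apply, transpose_apply, of_apply,
    dotProduct, mulVec, Pi.star_apply, Finset.mul_sum]

open scoped ComplexOrder in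
theorem star_dotProduct_self_eq_vecEnorm_sq {m : ℕ} (v : Fin m → ℂ) :
    star v ⬝ᵥ v = ((vecEnorm v ^ 2 : ℝ) : ℂ) := by
  obtain ⟨hre, him⟩ := Complex.nonneg_iff.mp (dotProduct_star_self_nonneg v)
  rw [vecEnorm, Real.sq_sqrt hre]
  exact Complex.ext rfl him.symm

open scoped ComplexOrder in
theorem vecEnorm_pos {m : ℕ} {v : Fin m → ℂ} (hv : v ≠ 0) : 0 < vecEnorm v :=
  Real.sqrt_pos.mpr (Complex.pos_iff.mp (dotProduct_star_self_pos_iff.mpr hv)).1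

theorem star_dotProduct_self_inv_vecEnorm_smul {m : ℕ} {v : Fin m → ℂ} (hv : v ≠ 0) :
    star ((vecEnorm v : ℂ)⁻¹ • v) ⬝ᵥ ((vecEnorm v : ℂ)⁻¹ • v) = 1 := by
  have ht : (vecEnorm v : ℂ) ≠ 0 := Complex.ofReal_ne_zero.mpr (vecEnorm_pos hv).ne'
  rw [star_smul, smul_dotProduct, dotProduct_smul, star_dotProduct_self_eq_vecEnorm_sq]
  simp only [smul_eq_mul, star_inv₀, Complex.star_def, Complex.conj_ofReal]
  push_cast
  field_simp

theorem conjTranspose_mul_self_of_orthonormal_pair {u v : ι → ℂ} (hu : star u ⬝ᵥ u = 1)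
    (huv : star u ⬝ᵥ v = 0) (hv : star v ⬝ᵥ v = 1) : (of ![u, v])ᵀᴴ * (of ![u, v])ᵀ = 1 := by
  classical
  have hvu : star v ⬝ᵥ u = 0 := by rw [star_dotProduct, huv, star_zero]
  rw [← Matrix.mul_one (of _)ᵀᴴ, conjTranspose_transpose_of_mul_mul, one_fin_two]
  ext i j
  fin_cases i <;> fin_cases j <;> simp [hu, huv, hvu, hv]

theorem exists_re_star_dotProduct_mulVec_eq {b : ℝ} (hb : b ≠ 0) (r : ℂ) (a : ℝ) :
    ∃ y : Fin 2 → ℂ, (star y ⬝ᵥ (!![0, (b : ℂ); (b : ℂ), r] *ᵥ y)).re = a := by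
  obtain ⟨s, hs⟩ : ∃ s : ℝ, 2 * s * b = a - r.re := ⟨(a - r.re) / (2 * b), by field_simp⟩
  have hform : star ![(s : ℂ), 1] ⬝ᵥ (!![0, (b : ℂ); (b : ℂ), r] *ᵥ ![(s : ℂ), 1])
      = ((2 * s * b : ℝ) : ℂ) + r := by
    simp [dotProduct, Fin.sum_univ_two, mulVec]
    ring
  refine ⟨![(s : ℂ), 1], ?_⟩
  rw [hform, Complex.add_re, Complex.ofReal_re, hs, sub_add_cancel]

theorem simple_eigentriplet_projected_C {n : ℕ}
    (A C : Matrix (Fin n) (Fin n) ℂ) (hA : A.IsHermitian) (hC : C.IsHermitian)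
    (lam : ℝ → ℝ) (x : ℝ → Fin n → ℂ)
    (lam' : ℝ → ℝ) (x' : ℝ → Fin n → ℂ) (lam'' : ℝ → ℝ)
    (hlam : ∀ μ : ℝ, HasDerivAt lam (lam' μ) μ)
    (hx : ∀ μ : ℝ, HasDerivAt x (x' μ) μ)
    (hlam' : ∀ μ : ℝ, HasDerivAt lam' (lam'' μ) μ)
    (heig : ∀ μ : ℝ, (A - (μ : ℂ) • C) *ᵥ x μ = (lam μ : ℂ) • x μ)
    (hunit : ∀ μ : ℝ, star (x μ) ⬝ᵥ x μ = 1)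
    (hgauge : ∀ μ : ℝ, star (x μ) ⬝ᵥ x' μ = 0)
    (μs : ℝ) (hiso : star (x μs) ⬝ᵥ (C *ᵥ x μs) = 0)
    (hxp : x' μs ≠ 0)
    (Vt : Matrix (Fin n) (Fin 2) ℂ)
    (hVt : Vt = Matrix.of fun i (j : Fin 2) =>
      if j = 0 then x μs i else x' μs i / (vecEnorm (x' μs) : ℂ)) :
    Vtᴴ * Vt = 1 ∧
    (Vtᴴ * C * Vt) 0 0 = 0 ∧
    (Vtᴴ * C * Vt) 0 1 = (lam'' μs : ℂ) / (-2 * (vecEnorm (x' μs) : ℂ)) ∧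
    (Vtᴴ * C * Vt).det = -(((lam'' μs / (2 * vecEnorm (x' μs))) ^ 2 : ℝ) : ℂ) ∧
    (lam'' μs ≠ 0 →
      (∃ y : Fin 2 → ℂ, 0 < (star y ⬝ᵥ ((Vtᴴ * C * Vt) *ᵥ y)).re) ∧
      (∃ y : Fin 2 → ℂ, (star y ⬝ᵥ ((Vtᴴ * C * Vt) *ᵥ y)).re < 0)) := by
  set t := vecEnorm (x' μs)
  set u := (t : ℂ)⁻¹ • x' μs
  have hVt' : Vt = (of ![x μs, u])ᵀ := by
    rw [hVt]
    ext i j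
    fin_cases j <;> simp [u, div_eq_inv_mul]
  have hc : star (x μs) ⬝ᵥ (C *ᵥ x' μs) = -(lam'' μs : ℂ) / 2 := by
    linear_combination
      eigenvalue_second_deriv_eq hA hC hlam hx (hlam' μs) heig hunit (hgauge μs) / 2
  have hc' : star (x' μs) ⬝ᵥ (C *ᵥ x μs) = -(lam'' μs : ℂ) / 2 := by
    rw [star_dotProduct_mulVec_deriv_comm hA hC (hlam μs) (hx μs) heig (hgauge μs), hc]
  set b : ℝ := lam'' μs / (-2 * t)
  have hgram : Vtᴴ * C * Vt = !![0, (b : ℂ); (b : ℂ), star u ⬝ᵥ (C *ᵥ u)] := by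
    rw [hVt', conjTranspose_transpose_of_mul_mul]
    ext i j
    fin_cases i <;> fin_cases j <;> simp [hiso, u, b, mulVec_smul, hc, hc'] <;> ring
  have horth : Vtᴴ * Vt = 1 := hVt' ▸ conjTranspose_mul_self_of_orthonormal_pair (hunit μs)
    (by simp [u, hgauge]) (star_dotProduct_self_inv_vecEnorm_smul hxp)
  refine ⟨horth, by simp [hgram], by simp [hgram, b], ?_, fun hl2 => ?_⟩
  · rw [hgram, det_fin_two_of]
    simp only [b]
    push_cast
    ring
  · have hb : b ≠ 0 := div_ne_zero hl2 (mul_ne_zero (by norm_num) (vecEnorm_pos hxp).ne')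
    obtain ⟨ypos, hpos⟩ := exists_re_star_dotProduct_mulVec_eq hb (star u ⬝ᵥ (C *ᵥ u)) 1
    obtain ⟨yneg, hneg⟩ := exists_re_star_dotProduct_mulVec_eq hb (star u ⬝ᵥ (C *ᵥ u)) (-1)
    rw [hgram]
    exact ⟨⟨ypos, hpos ▸ one_pos⟩, ⟨yneg, hneg ▸ neg_one_lt_zero⟩⟩
end

section
/- Let g₁, g₂, r₁, r₂ be real numbers with g₁ ≥ g̲₁ > 0, 0 < g̲₂ ≤ g₂ ≤ ḡ₂, g₁ ≤ ḡ₁, |r₁| ≤ g̲₁/2, |r₂| ≤ g̲₂/2. Then |√((g₁+r₁)/(g₂+r₂)) - √(g₁/g₂)| ≤ 2(ḡ₂|r₁| + ḡ₁|r₂|)/√(g̲₁ g̲₂³). -/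
theorem sqrt_ratio_perturbation (g₁ g₂ r₁ r₂ gl₁ gl₂ gu₁ gu₂ : ℝ)
    (hgl₁ : 0 < gl₁) (hg₁ : gl₁ ≤ g₁) (hgu₁ : g₁ ≤ gu₁)
    (hgl₂ : 0 < gl₂) (hg₂ : gl₂ ≤ g₂) (hgu₂ : g₂ ≤ gu₂)
    (hr₁ : |r₁| ≤ gl₁ / 2) (hr₂ : |r₂| ≤ gl₂ / 2) :
    |Real.sqrt ((g₁ + r₁) / (g₂ + r₂)) - Real.sqrt (g₁ / g₂)| ≤
      2 * (gu₂ * |r₁| + gu₁ * |r₂|) / Real.sqrt (gl₁ * gl₂ ^ 3) := by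
  obtain ⟨hr₁l, hr₁u⟩ := abs_le.1 hr₁
  obtain ⟨hr₂l, hr₂u⟩ := abs_le.1 hr₂
  have ha0 : (0:ℝ) < g₁ + r₁ := by linarith
  have hb0 : (0:ℝ) < g₂ + r₂ := by linarith
  have hb : gl₂ / 2 ≤ g₂ + r₂ := by linarith
  have hg10 : 0 < g₁ := lt_of_lt_of_le hgl₁ hg₁
  have hg20 : 0 < g₂ := lt_of_lt_of_le hgl₂ hg₂
  set x := (g₁ + r₁) / (g₂ + r₂) with hxdef
  set y := g₁ / g₂ with hydef
  have hx0 : 0 ≤ x := le_of_lt (div_pos ha0 hb0)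
  have hy0 : 0 < y := div_pos hg10 hg20
  have hsy : 0 < Real.sqrt y := Real.sqrt_pos.2 hy0
  have key : |Real.sqrt x - Real.sqrt y| ≤ |x - y| / Real.sqrt y := by
    rw [le_div_iff₀ hsy]
    have h1 : (Real.sqrt x - Real.sqrt y) * (Real.sqrt x + Real.sqrt y) = x - y := by
      have hx := Real.sq_sqrt hx0
      have hy := Real.sq_sqrt hy0.le
      nlinarith [hx, hy]
    have hsum : 0 ≤ Real.sqrt x + Real.sqrt y := by positivity
    calc |Real.sqrt x - Real.sqrt y| * Real.sqrt y
        ≤ |Real.sqrt x - Real.sqrt y| * (Real.sqrt x + Real.sqrt y) := by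
          apply mul_le_mul_of_nonneg_left _ (abs_nonneg _)
          have := Real.sqrt_nonneg x; linarith
      _ = |(Real.sqrt x - Real.sqrt y) * (Real.sqrt x + Real.sqrt y)| := by
          rw [abs_mul, abs_of_nonneg hsum]
      _ = |x - y| := by rw [h1]
  have hdiff : x - y = (r₁ * g₂ - r₂ * g₁) / ((g₂ + r₂) * g₂) := by
    rw [hxdef, hydef]
    field_simp
    ring
  have hsg1 : 0 < Real.sqrt g₁ := Real.sqrt_pos.2 hg10
  have hsg2 : 0 < Real.sqrt g₂ := Real.sqrt_pos.2 hg20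
  have hsyval : Real.sqrt y = Real.sqrt g₁ / Real.sqrt g₂ := Real.sqrt_div' g₁ hg20.le ▸ by
    rw [hydef, Real.sqrt_div hg10.le]
  have heq : |x - y| / Real.sqrt y =
      |r₁ * g₂ - r₂ * g₁| / ((g₂ + r₂) * (Real.sqrt g₁ * Real.sqrt g₂)) := by
    rw [hdiff, hsyval, abs_div, abs_of_pos (mul_pos hb0 hg20)]
    have h2 : Real.sqrt g₂ * Real.sqrt g₂ = g₂ := Real.mul_self_sqrt hg20.le
    field_simp
    linear_combination |r₁ * g₂ - r₂ * g₁| * h2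
  have hnum : |r₁ * g₂ - r₂ * g₁| ≤ gu₂ * |r₁| + gu₁ * |r₂| := by
    calc |r₁ * g₂ - r₂ * g₁| ≤ |r₁ * g₂| + |r₂ * g₁| := abs_sub _ _
      _ = |r₁| * g₂ + |r₂| * g₁ := by
          rw [abs_mul, abs_mul, abs_of_pos hg20, abs_of_pos hg10]
      _ ≤ gu₂ * |r₁| + gu₁ * |r₂| := by
          have := abs_nonneg r₁; have := abs_nonneg r₂
          nlinarith
  have hsqrt3 : Real.sqrt (gl₁ * gl₂ ^ 3) = Real.sqrt gl₁ * (gl₂ * Real.sqrt gl₂) := by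
    rw [Real.sqrt_mul hgl₁.le]
    congr 1
    rw [show gl₂ ^ 3 = gl₂ ^ 2 * gl₂ by ring, Real.sqrt_mul (by positivity),
      Real.sqrt_sq hgl₂.le]
  have hden : Real.sqrt (gl₁ * gl₂ ^ 3) / 2 ≤ (g₂ + r₂) * (Real.sqrt g₁ * Real.sqrt g₂) := by
    rw [hsqrt3]
    have h1 : Real.sqrt gl₁ ≤ Real.sqrt g₁ := Real.sqrt_le_sqrt hg₁
    have h2 : Real.sqrt gl₂ ≤ Real.sqrt g₂ := Real.sqrt_le_sqrt hg₂
    have h3 : 0 < Real.sqrt gl₁ := Real.sqrt_pos.2 hgl₁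
    have h4 : 0 < Real.sqrt gl₂ := Real.sqrt_pos.2 hgl₂
    calc Real.sqrt gl₁ * (gl₂ * Real.sqrt gl₂) / 2
        = (gl₂ / 2) * (Real.sqrt gl₁ * Real.sqrt gl₂) := by ring
      _ ≤ (g₂ + r₂) * (Real.sqrt g₁ * Real.sqrt g₂) := by
          apply mul_le_mul hb (mul_le_mul h1 h2 h4.le hsg1.le) (by positivity) hb0.le
  have hs3pos : 0 < Real.sqrt (gl₁ * gl₂ ^ 3) := Real.sqrt_pos.2 (by positivity)
  calc |Real.sqrt x - Real.sqrt y| ≤ |x - y| / Real.sqrt y := key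
    _ = |r₁ * g₂ - r₂ * g₁| / ((g₂ + r₂) * (Real.sqrt g₁ * Real.sqrt g₂)) := heq
    _ ≤ (gu₂ * |r₁| + gu₁ * |r₂|) / (Real.sqrt (gl₁ * gl₂ ^ 3) / 2) := by
        have hnn : 0 ≤ gu₂ * |r₁| + gu₁ * |r₂| :=
          add_nonneg (mul_nonneg (by linarith) (abs_nonneg _))
            (mul_nonneg (by linarith) (abs_nonneg _))
        apply div_le_div₀ hnn hnum (by positivity) hden
    _ = 2 * (gu₂ * |r₁| + gu₁ * |r₂|) / Real.sqrt (gl₁ * gl₂ ^ 3) := by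
        rw [div_div_eq_mul_div]; ring
end
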